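/- Let G be a Hausdorff topological group, U a symmetric open neighborhood of the identity, and 𝓤 a uniformity on G inducing the topology of G such that the multiplication map (x,y) ↦ x·y : U²×U² → G is uniformly continuous with respect to 𝓤. Then the inversion map x ↦ x⁻¹ : U → U is uniformly continuous with respect to (the restriction to U of) 𝓤. -/

import Mathlib

open Filter Set Topology Pointwise

/-- The left uniformity filter of a topological group. -/
def leftUF (G : Type*) [Group G] [TopologicalSpace G] : Filter (G × G) :=
  Filter.comap (fun p : G × G => p.1⁻¹ * p.2) (nhds 1)

/-- The right uniformity filter of a topological group. -/
def rightUF (G : Type*) [Group G] [TopologicalSpace G] : Filter (G × G) :=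
  Filter.comap (fun p : G × G => p.1 * p.2⁻¹) (nhds 1)

/-- The product of a uniformity-like filter on `G × G` with itself, as a filter on
`(G × G) × (G × G)`; this agrees with the product uniformity when the filter is a uniformity. -/
def prodUF {G : Type*} (F : Filter (G × G)) : Filter ((G × G) × (G × G)) :=
  Filter.comap (fun q : (G × G) × (G × G) => (q.1.1, q.2.1)) F ⊓
    Filter.comap (fun q : (G × G) × (G × G) => (q.1.2, q.2.2)) F

/-- Multiplication is uniformly continuous on the set `s ⊆ G × G` with respect to the
uniformity-like filter `F` on `G × G`. -/
def MulUCOn {G : Type*} [Mul G] (F : Filter (G × G)) (s : Set (G × G)) : Prop :=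
  Filter.Tendsto (fun q : (G × G) × (G × G) => (q.1.1 * q.1.2, q.2.1 * q.2.2))
    (prodUF F ⊓ 𝓟 (s ×ˢ s)) F

/-!
Write `x ≈ y` for closeness. Uniform continuity of multiplication on `U² × U²` gives
`1 = x⁻¹x ≈ x⁻¹y` for `x, y ∈ U`, hence also `1 ≈ y⁻¹x` by symmetry of the uniformity;
multiplying on the right by `x⁻¹ ≈ x⁻¹` then gives `x⁻¹ = 1 · x⁻¹ ≈ y⁻¹x · x⁻¹ = y⁻¹`.
-/

theorem MulUCOn.tendsto_mul {α G : Type*} [Mul G] {F : Filter (G × G)} {s : Set (G × G)}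
    (h : MulUCOn F s) {l : Filter α} {f g : α → G × G} (hf : Tendsto f l F)
    (hg : Tendsto g l F) (hs : ∀ᶠ x in l, ((f x).1, (g x).1) ∈ s ∧ ((f x).2, (g x).2) ∈ s) :
    Tendsto (fun x => ((f x).1 * (g x).1, (f x).2 * (g x).2)) l F :=
  h.comp (f := fun x => (((f x).1, (g x).1), ((f x).2, (g x).2))) <| tendsto_inf.2
    ⟨tendsto_inf.2 ⟨tendsto_comap_iff.2 hf, tendsto_comap_iff.2 hg⟩, tendsto_principal.2 hs⟩

theorem Set.inv_mem_of_inv_eq {G : Type*} [InvolutiveInv G] {U : Set G} (hUs : U⁻¹ = U)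
    {x : G} (hx : x ∈ U) : x⁻¹ ∈ U :=
  hUs ▸ Set.inv_mem_inv.2 hx

theorem Set.mul_mem_sq {G : Type*} [Monoid G] {U : Set G} {x y : G} (hx : x ∈ U) (hy : y ∈ U) :
    x * y ∈ U ^ 2 :=
  sq U ▸ Set.mul_mem_mul hx hy

theorem Set.subset_sq {G : Type*} [Monoid G] {U : Set G} (hU1 : (1 : G) ∈ U) : U ⊆ U ^ 2 :=
  sq U ▸ Set.subset_mul_left U hU1

section UniformInv

open Uniformity

variable {G : Type*} [Group G] [UniformSpace G] {U : Set G}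

theorem tendsto_one_inv_mul_of_mulUCOn (hU1 : (1 : G) ∈ U) (hUs : U⁻¹ = U)
    (hmul : MulUCOn (𝓤 G) ((U ^ 2) ×ˢ (U ^ 2))) :
    Tendsto (fun p : G × G => ((1 : G), p.1⁻¹ * p.2)) (𝓤 G ⊓ 𝓟 (U ×ˢ U)) (𝓤 G) := by
  have h := hmul.tendsto_mul (tendsto_diag_uniformity (fun p : G × G => p.1⁻¹) _)
    (tendsto_id.mono_left inf_le_left) <| by
      filter_upwards [mem_inf_of_right (mem_principal_self (U ×ˢ U))] with p ⟨hx, hy⟩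
      exact ⟨⟨Set.subset_sq hU1 (Set.inv_mem_of_inv_eq hUs hx), Set.subset_sq hU1 hx⟩,
          Set.subset_sq hU1 (Set.inv_mem_of_inv_eq hUs hx), Set.subset_sq hU1 hy⟩
  simpa only [inv_mul_cancel, id] using h

theorem tendsto_one_inv_mul_swap_of_mulUCOn (hU1 : (1 : G) ∈ U) (hUs : U⁻¹ = U)
    (hmul : MulUCOn (𝓤 G) ((U ^ 2) ×ˢ (U ^ 2))) :
    Tendsto (fun p : G × G => ((1 : G), p.2⁻¹ * p.1)) (𝓤 G ⊓ 𝓟 (U ×ˢ U)) (𝓤 G) :=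
  (tendsto_one_inv_mul_of_mulUCOn hU1 hUs hmul).comp <|
    (tendsto_swap_uniformity.inf (tendsto_principal_principal.2 fun _ hp => hp.symm))

theorem tendsto_inv_of_mulUCOn (hU1 : (1 : G) ∈ U) (hUs : U⁻¹ = U)
    (hmul : MulUCOn (𝓤 G) ((U ^ 2) ×ˢ (U ^ 2))) :
    Tendsto (fun p : G × G => (p.1⁻¹, p.2⁻¹)) (𝓤 G ⊓ 𝓟 (U ×ˢ U)) (𝓤 G ⊓ 𝓟 (U ×ˢ U)) := by
  have h := hmul.tendsto_mul (tendsto_one_inv_mul_swap_of_mulUCOn hU1 hUs hmul)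
    (tendsto_diag_uniformity (fun p : G × G => p.1⁻¹) _) <| by
      filter_upwards [mem_inf_of_right (mem_principal_self (U ×ˢ U))] with p ⟨hx, hy⟩
      exact ⟨⟨Set.subset_sq hU1 hU1, Set.subset_sq hU1 (Set.inv_mem_of_inv_eq hUs hx)⟩,
          Set.mul_mem_sq (Set.inv_mem_of_inv_eq hUs hy) hx,
          Set.subset_sq hU1 (Set.inv_mem_of_inv_eq hUs hx)⟩
  simp only [one_mul, mul_inv_cancel_right] at h
  exact tendsto_inf.2 ⟨h, (tendsto_principal_principal.2 fun p (hp : p ∈ U ×ˢ U) =>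
    Set.mk_mem_prod (Set.inv_mem_of_inv_eq hUs hp.1) (Set.inv_mem_of_inv_eq hUs hp.2)).mono_left
      inf_le_right⟩

end UniformInv

theorem stmt_1_general {G : Type*} [Group G]
    (U : Set G) (hU1 : (1 : G) ∈ U) (hUs : U⁻¹ = U)
    (u : UniformSpace G)
    (hmul : MulUCOn (@uniformity G u) ((U ^ 2) ×ˢ (U ^ 2))) :
    Filter.Tendsto (fun p : G × G => (p.1⁻¹, p.2⁻¹))
      (@uniformity G u ⊓ 𝓟 (U ×ˢ U)) (@uniformity G u ⊓ 𝓟 (U ×ˢ U)) :=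
  tendsto_inv_of_mulUCOn hU1 hUs hmul

theorem stmt_1 {G : Type*} [Group G] [TopologicalSpace G] [IsTopologicalGroup G] [T2Space G]
    (U : Set G) (hUo : IsOpen U) (hU1 : (1 : G) ∈ U) (hUs : U⁻¹ = U)
    (u : UniformSpace G) (hu : u.toTopologicalSpace = ‹TopologicalSpace G›)
    (hmul : MulUCOn (@uniformity G u) ((U ^ 2) ×ˢ (U ^ 2))) :
    Filter.Tendsto (fun p : G × G => (p.1⁻¹, p.2⁻¹))
      (@uniformity G u ⊓ 𝓟 (U ×ˢ U)) (@uniformity G u ⊓ 𝓟 (U ×ˢ U)) :=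
  stmt_1_general U hU1 hUs u hmul
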